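/- Let k ≥ 3 and let G be a connected k-regular graph of order n and diameter 2 that is triangle-free and irreducible, with adjacency matrix A, and let D be the distance matrix of the bipartite double cover B(G). Suppose w ∈ ℝ^V satisfies A·w = λ·w and ∑_{v ∈ V} w(v) = 0. Then the vector e = (w, w) ∈ ℝ^{V ⊕ V} satisfies D·e = 0, and the vector f = (w, -w) satisfies D·f = (4λ - 4)·f. -/

import Mathlib

open SimpleGraph

/-- The bipartite double cover of a graph `G`, on vertex set `V ⊕ V`. -/
def bipartiteDoubleCover {V : Type*} (G : SimpleGraph V) : SimpleGraph (V ⊕ V) where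
  Adj x y :=
    match x, y with
    | Sum.inl u, Sum.inr v => G.Adj u v
    | Sum.inr u, Sum.inl v => G.Adj u v
    | _, _ => False
  symm := ⟨by
    rintro (u | u) (v | v) h
    · exact h.elim
    · exact h.symm
    · exact h.symm
    · exact h.elim⟩
  loopless := ⟨by
    rintro (u | u) h
    · exact h
    · exact h⟩

/-- The distance matrix of a graph `H`, over the reals. -/
noncomputable def distMatrix {W : Type*} (H : SimpleGraph W) : Matrix W W ℝ :=
  Matrix.of fun x y => (H.dist x y : ℝ)

set_option linter.unusedSectionVars false

section Lemmas


section T1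


variable {V : Type*} (G : SimpleGraph V)

@[simp] lemma bdc_lr {u v : V} : (_root_.bipartiteDoubleCover G).Adj (Sum.inl u) (Sum.inr v) ↔ G.Adj u v := Iff.rfl
@[simp] lemma bdc_rl {u v : V} : (_root_.bipartiteDoubleCover G).Adj (Sum.inr u) (Sum.inl v) ↔ G.Adj u v := Iff.rfl
@[simp] lemma bdc_ll {u v : V} : ¬ (_root_.bipartiteDoubleCover G).Adj (Sum.inl u) (Sum.inl v) := fun h => h
@[simp] lemma bdc_rr {u v : V} : ¬ (_root_.bipartiteDoubleCover G).Adj (Sum.inr u) (Sum.inr v) := fun h => h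

lemma bdc_adj_isLeft {x y : V ⊕ V} (h : (_root_.bipartiteDoubleCover G).Adj x y) :
    x.isLeft = !y.isLeft := by
  rcases x with u | u <;> rcases y with v | v <;> simp_all

lemma bdc_parity {x y : V ⊕ V} (p : (_root_.bipartiteDoubleCover G).Walk x y) :
    Even p.length ↔ (x.isLeft = y.isLeft) := by
  induction p with
  | nil => simp
  | cons h p ih =>
    rename_i a b c
    rw [Walk.length_cons, Nat.even_add_one, ih, bdc_adj_isLeft G h]
    cases b.isLeft <;> cases c.isLeft <;> simp

def bdcSwap : _root_.bipartiteDoubleCover G →g _root_.bipartiteDoubleCover G where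
  toFun := Sum.swap
  map_rel' := by rintro (u|u) (v|v) h <;> first | exact h.elim | exact h

@[simp] lemma bdcSwap_apply (x : V ⊕ V) : bdcSwap G x = Sum.swap x := rfl

lemma bdc_dist_swap_le (x y : V ⊕ V) :
    (_root_.bipartiteDoubleCover G).dist (Sum.swap x) (Sum.swap y) ≤ (_root_.bipartiteDoubleCover G).dist x y := by
  by_cases hr : (_root_.bipartiteDoubleCover G).Reachable x y
  · obtain ⟨p, hp⟩ := hr.exists_walk_length_eq_dist
    calc (_root_.bipartiteDoubleCover G).dist (Sum.swap x) (Sum.swap y)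
        ≤ (p.map (bdcSwap G)).length := SimpleGraph.dist_le _
      _ = p.length := Walk.length_map _ _
      _ = _ := hp
  · have hr2 : ¬ (_root_.bipartiteDoubleCover G).Reachable (Sum.swap x) (Sum.swap y) := by
      intro h
      exact hr (by simpa using h.map (bdcSwap G))
    rw [SimpleGraph.dist_eq_zero_of_not_reachable hr2]
    exact Nat.zero_le _

lemma bdc_dist_swap (x y : V ⊕ V) :
    (_root_.bipartiteDoubleCover G).dist (Sum.swap x) (Sum.swap y) = (_root_.bipartiteDoubleCover G).dist x y := by
  refine le_antisymm (bdc_dist_swap_le G x y) ?_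
  have := bdc_dist_swap_le G (Sum.swap x) (Sum.swap y)
  simpa using this

end T1
section T2


variable {V : Type*} [Fintype V] (G : SimpleGraph V) [DecidableRel G.Adj]

lemma common_nbr (hconn : G.Connected) (hdiam : G.diam = 2) {u v : V}
    (hne : u ≠ v) (hna : ¬ G.Adj u v) : ∃ x, G.Adj u x ∧ G.Adj x v := by
  have htop : G.ediam ≠ ⊤ := by
    intro h
    rw [SimpleGraph.diam, h] at hdiam
    simp at hdiam
  have h2 : G.dist u v ≤ 2 := hdiam ▸ G.dist_le_diam htop
  have h0 : G.dist u v ≠ 0 := fun h =>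
    hne (((hconn.preconnected u v).dist_eq_zero_iff).mp h)
  have h1 : G.dist u v ≠ 1 := fun h => hna (SimpleGraph.dist_eq_one_iff_adj.mp h)
  have hd : G.dist u v = 2 := by omega
  obtain ⟨p, hp⟩ := hconn.exists_walk_length_eq_dist u v
  rw [hd] at hp
  cases p with
  | nil => simp at hp
  | cons h q =>
    cases q with
    | nil => simp at hp
    | cons h' q' =>
      simp [Walk.length_cons] at hp
      have := Walk.Nil.eq hp
      subst this
      exact ⟨_, h, h'⟩

lemma exists_path3 (hconn : G.Connected) (hdiam : G.diam = 2) (k : ℕ)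
    (hreg : G.IsRegularOfDegree k)
    (hirr : ∀ u v : V, G.neighborSet u = G.neighborSet v → u = v)
    {u v : V} (hne : u ≠ v) (hna : ¬ G.Adj u v) :
    ∃ a b, G.Adj u a ∧ G.Adj a b ∧ G.Adj b v := by
  classical
  have hns : ¬ (G.neighborFinset u ⊆ G.neighborFinset v) := by
    intro hsub
    have heq : G.neighborFinset u = G.neighborFinset v :=
      Finset.eq_of_subset_of_card_le hsub (by
        rw [G.card_neighborFinset_eq_degree, G.card_neighborFinset_eq_degree, hreg u, hreg v])
    apply hne
    apply hirr u v
    have := congrArg (fun s : Finset V => (s : Set V)) heq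
    simpa [SimpleGraph.neighborFinset] using this
  obtain ⟨a, hau, hav⟩ := Finset.not_subset.mp hns
  rw [SimpleGraph.mem_neighborFinset] at hau
  rw [SimpleGraph.mem_neighborFinset] at hav
  have hanev : a ≠ v := fun h => hna (h ▸ hau)
  obtain ⟨b, hab, hbv⟩ := common_nbr G hconn hdiam hanev (fun h => hav h.symm)
  exact ⟨a, b, hau, hab, hbv⟩

lemma exists_path4 (hconn : G.Connected) (hdiam : G.diam = 2) (k : ℕ) (hk : 3 ≤ k)
    (hreg : G.IsRegularOfDegree k)
    (htf : ∀ u v : V, G.Adj u v → ∀ x : V, ¬(G.Adj u x ∧ G.Adj v x))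
    (hirr : ∀ u v : V, G.neighborSet u = G.neighborSet v → u = v)
    {u v : V} (huv : G.Adj u v) :
    ∃ a b c, G.Adj u a ∧ G.Adj a b ∧ G.Adj b c ∧ G.Adj c v := by
  classical
  by_cases hex : ∃ a ∈ (G.neighborFinset u).erase v, ∃ c ∈ (G.neighborFinset v).erase u, ¬ G.Adj a c
  · obtain ⟨a, ha, c, hc, hnac⟩ := hex
    have hua : G.Adj u a := SimpleGraph.mem_neighborFinset .. |>.mp (Finset.mem_of_mem_erase ha)
    have hvc : G.Adj v c := SimpleGraph.mem_neighborFinset .. |>.mp (Finset.mem_of_mem_erase hc)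
    have hanec : a ≠ c := fun h => htf u v huv a ⟨hua, h ▸ hvc⟩
    obtain ⟨b, hab, hbc⟩ := common_nbr G hconn hdiam hanec hnac
    exact ⟨a, b, c, hua, hab, hbc, hvc.symm⟩
  · push_neg at hex
    have hcard : 2 ≤ ((G.neighborFinset u).erase v).card := by
      rw [Finset.card_erase_of_mem (by rw [SimpleGraph.mem_neighborFinset]; exact huv)]
      rw [G.card_neighborFinset_eq_degree, hreg u]
      omega
    obtain ⟨a1, ha1, a2, ha2, hne12⟩ := Finset.one_lt_card.mp
      (show 1 < ((G.neighborFinset u).erase v).card by omega)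
    have key : ∀ a ∈ (G.neighborFinset u).erase v,
        G.neighborFinset a = insert u ((G.neighborFinset v).erase u) := by
      intro a ha
      have hua : G.Adj u a := SimpleGraph.mem_neighborFinset .. |>.mp (Finset.mem_of_mem_erase ha)
      refine (Finset.eq_of_subset_of_card_le ?_ ?_).symm
      · intro c hc
        rcases Finset.mem_insert.mp hc with rfl | hc
        · rw [SimpleGraph.mem_neighborFinset]; exact hua.symm
        · rw [SimpleGraph.mem_neighborFinset]; exact hex a ha c hc
      · rw [G.card_neighborFinset_eq_degree, hreg a,
          Finset.card_insert_of_notMem (Finset.notMem_erase u _),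
          Finset.card_erase_of_mem (by rw [SimpleGraph.mem_neighborFinset]; exact huv.symm),
          G.card_neighborFinset_eq_degree, hreg v]
        omega
    apply absurd _ hne12
    apply hirr a1 a2
    have heq : G.neighborFinset a1 = G.neighborFinset a2 := by rw [key a1 ha1, key a2 ha2]
    have := congrArg (fun s : Finset V => (s : Set V)) heq
    simpa [SimpleGraph.neighborFinset] using this

lemma exists_path5 (hconn : G.Connected) (hdiam : G.diam = 2) (k : ℕ) (hk : 3 ≤ k)
    (hreg : G.IsRegularOfDegree k)
    (htf : ∀ u v : V, G.Adj u v → ∀ x : V, ¬(G.Adj u x ∧ G.Adj v x))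
    (hirr : ∀ u v : V, G.neighborSet u = G.neighborSet v → u = v) (u : V) :
    ∃ a b c d, G.Adj u a ∧ G.Adj a b ∧ G.Adj b c ∧ G.Adj c d ∧ G.Adj d u := by
  classical
  have hne : (G.neighborFinset u).Nonempty := by
    rw [← Finset.card_pos, G.card_neighborFinset_eq_degree, hreg u]; omega
  obtain ⟨a, ha⟩ := hne
  have hua : G.Adj u a := (SimpleGraph.mem_neighborFinset ..).mp ha
  have hb : ((G.neighborFinset a).erase u).Nonempty := by
    rw [← Finset.card_pos, Finset.card_erase_of_mem
      (by rw [SimpleGraph.mem_neighborFinset]; exact hua.symm),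
      G.card_neighborFinset_eq_degree, hreg a]
    omega
  obtain ⟨b, hbmem⟩ := hb
  have hab : G.Adj a b := (SimpleGraph.mem_neighborFinset ..).mp (Finset.mem_of_mem_erase hbmem)
  have hbneu : b ≠ u := Finset.ne_of_mem_erase hbmem
  have hnub : ¬ G.Adj b u := fun h => htf u a hua b ⟨h.symm, hab⟩
  obtain ⟨c, d, hbc, hcd, hdu⟩ := exists_path3 G hconn hdiam k hreg hirr hbneu hnub
  exact ⟨a, b, c, d, hua, hab, hbc, hcd, hdu⟩

end T2

section Dist
variable {V : Type*} [Fintype V] (G : SimpleGraph V) [DecidableRel G.Adj]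


lemma no_walk2 (htf : ∀ u v : V, G.Adj u v → ∀ x : V, ¬(G.Adj u x ∧ G.Adj v x))
    {u v : V} (huv : G.Adj u v) (q : (_root_.bipartiteDoubleCover G).Walk (Sum.inl u) (Sum.inl v)) : q.length ≠ 2 := by
  cases q with
  | nil => simp
  | @cons _ m _ h q =>
    cases q with
    | nil => simp
    | @cons _ m2 _ h' q' =>
      intro hlen
      simp [Walk.length_cons] at hlen
      have : m2 = Sum.inl v := Walk.Nil.eq hlen
      subst this
      rcases m with x | x
      · exact bdc_ll G h
      · exact htf u v huv x ⟨(bdc_lr G).mp h, ((bdc_rl G).mp h').symm⟩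

lemma no_walk3 (htf : ∀ u v : V, G.Adj u v → ∀ x : V, ¬(G.Adj u x ∧ G.Adj v x))
    {u : V} (q : (_root_.bipartiteDoubleCover G).Walk (Sum.inl u) (Sum.inr u)) : q.length ≠ 3 := by
  cases q with
  | @cons _ m1 _ h q =>
    cases q with
    | nil => simp
    | @cons _ m2 _ h' q' =>
      cases q' with
      | nil => simp
      | @cons _ m3 _ h'' q'' =>
        intro hlen
        simp [Walk.length_cons] at hlen
        have : m3 = Sum.inr u := Walk.Nil.eq hlen
        subst this
        rcases m1 with x | x
        · exact bdc_ll G h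
        · rcases m2 with y | y
          · exact htf u x ((bdc_lr G).mp h) y ⟨((bdc_lr G).mp h'').symm, (bdc_rl G).mp h'⟩
          · exact bdc_rr G h'

lemma dist_ll_self (u : V) : (_root_.bipartiteDoubleCover G).dist (Sum.inl u) (Sum.inl u) = 0 := by simp

lemma dist_ll_nadj (hconn : G.Connected) (hdiam : G.diam = 2) {u v : V}
    (hne : u ≠ v) (hna : ¬ G.Adj u v) : (_root_.bipartiteDoubleCover G).dist (Sum.inl u) (Sum.inl v) = 2 := by
  obtain ⟨x, h1, h2⟩ := common_nbr G hconn hdiam hne hna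
  let p : (_root_.bipartiteDoubleCover G).Walk (Sum.inl u) (Sum.inl v) :=
    Walk.cons ((bdc_lr G).mpr h1) (Walk.cons ((bdc_rl G).mpr h2) Walk.nil)
  have hle : (_root_.bipartiteDoubleCover G).dist (Sum.inl u) (Sum.inl v) ≤ 2 := by
    simpa [p] using SimpleGraph.dist_le p
  have h0 : (_root_.bipartiteDoubleCover G).dist (Sum.inl u) (Sum.inl v) ≠ 0 := fun h =>
    hne (by simpa using (p.reachable.dist_eq_zero_iff).mp h)
  have h1' : (_root_.bipartiteDoubleCover G).dist (Sum.inl u) (Sum.inl v) ≠ 1 := fun h =>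
    bdc_ll G (SimpleGraph.dist_eq_one_iff_adj.mp h)
  obtain ⟨q, hq⟩ := p.reachable.exists_walk_length_eq_dist
  have heven : Even ((_root_.bipartiteDoubleCover G).dist (Sum.inl u) (Sum.inl v)) := hq ▸ (bdc_parity G q).mpr rfl
  rcases heven with ⟨m, hm⟩
  omega

lemma dist_ll_adj (hconn : G.Connected) (hdiam : G.diam = 2) (k : ℕ) (hk : 3 ≤ k)
    (hreg : G.IsRegularOfDegree k)
    (htf : ∀ u v : V, G.Adj u v → ∀ x : V, ¬(G.Adj u x ∧ G.Adj v x))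
    (hirr : ∀ u v : V, G.neighborSet u = G.neighborSet v → u = v)
    {u v : V} (huv : G.Adj u v) : (_root_.bipartiteDoubleCover G).dist (Sum.inl u) (Sum.inl v) = 4 := by
  obtain ⟨a, b, c, h1, h2, h3, h4⟩ := exists_path4 G hconn hdiam k hk hreg htf hirr huv
  let p : (_root_.bipartiteDoubleCover G).Walk (Sum.inl u) (Sum.inl v) :=
    Walk.cons ((bdc_lr G).mpr h1)
      (Walk.cons ((bdc_rl G).mpr h2)
        (Walk.cons ((bdc_lr G).mpr h3)
          (Walk.cons ((bdc_rl G).mpr h4) Walk.nil)))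
  have hle : (_root_.bipartiteDoubleCover G).dist (Sum.inl u) (Sum.inl v) ≤ 4 := by
    simpa [p] using SimpleGraph.dist_le p
  have h0 : (_root_.bipartiteDoubleCover G).dist (Sum.inl u) (Sum.inl v) ≠ 0 := fun h => by
    have : u = v := by simpa using (p.reachable.dist_eq_zero_iff).mp h
    exact G.loopless.irrefl u (this ▸ huv)
  obtain ⟨q, hq⟩ := p.reachable.exists_walk_length_eq_dist
  have heven : Even ((_root_.bipartiteDoubleCover G).dist (Sum.inl u) (Sum.inl v)) := hq ▸ (bdc_parity G q).mpr rfl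
  have h2' : (_root_.bipartiteDoubleCover G).dist (Sum.inl u) (Sum.inl v) ≠ 2 := fun h => no_walk2 G htf huv q (by omega)
  rcases heven with ⟨m, hm⟩
  omega

lemma dist_lr_adj {u v : V} (huv : G.Adj u v) : (_root_.bipartiteDoubleCover G).dist (Sum.inl u) (Sum.inr v) = 1 :=
  SimpleGraph.dist_eq_one_iff_adj.mpr ((bdc_lr G).mpr huv)

lemma dist_lr_nadj (hconn : G.Connected) (hdiam : G.diam = 2) (k : ℕ)
    (hreg : G.IsRegularOfDegree k)
    (hirr : ∀ u v : V, G.neighborSet u = G.neighborSet v → u = v)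
    {u v : V} (hne : u ≠ v) (hna : ¬ G.Adj u v) : (_root_.bipartiteDoubleCover G).dist (Sum.inl u) (Sum.inr v) = 3 := by
  obtain ⟨a, b, h1, h2, h3⟩ := exists_path3 G hconn hdiam k hreg hirr hne hna
  let p : (_root_.bipartiteDoubleCover G).Walk (Sum.inl u) (Sum.inr v) :=
    Walk.cons ((bdc_lr G).mpr h1)
      (Walk.cons ((bdc_rl G).mpr h2)
        (Walk.cons ((bdc_lr G).mpr h3) Walk.nil))
  have hle : (_root_.bipartiteDoubleCover G).dist (Sum.inl u) (Sum.inr v) ≤ 3 := by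
    simpa [p] using SimpleGraph.dist_le p
  obtain ⟨q, hq⟩ := p.reachable.exists_walk_length_eq_dist
  have hodd : ¬ Even ((_root_.bipartiteDoubleCover G).dist (Sum.inl u) (Sum.inr v)) := fun h =>
    by simpa using (bdc_parity G q).mp (hq ▸ h)
  have h1' : (_root_.bipartiteDoubleCover G).dist (Sum.inl u) (Sum.inr v) ≠ 1 := fun h =>
    hna ((bdc_lr G).mp (SimpleGraph.dist_eq_one_iff_adj.mp h))
  rw [Nat.even_iff] at hodd
  omega

lemma dist_lr_self (hconn : G.Connected) (hdiam : G.diam = 2) (k : ℕ) (hk : 3 ≤ k)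
    (hreg : G.IsRegularOfDegree k)
    (htf : ∀ u v : V, G.Adj u v → ∀ x : V, ¬(G.Adj u x ∧ G.Adj v x))
    (hirr : ∀ u v : V, G.neighborSet u = G.neighborSet v → u = v)
    (u : V) : (_root_.bipartiteDoubleCover G).dist (Sum.inl u) (Sum.inr u) = 5 := by
  obtain ⟨a, b, c, d, h1, h2, h3, h4, h5⟩ := exists_path5 G hconn hdiam k hk hreg htf hirr u
  let p : (_root_.bipartiteDoubleCover G).Walk (Sum.inl u) (Sum.inr u) :=
    Walk.cons ((bdc_lr G).mpr h1)
      (Walk.cons ((bdc_rl G).mpr h2)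
        (Walk.cons ((bdc_lr G).mpr h3)
          (Walk.cons ((bdc_rl G).mpr h4)
            (Walk.cons ((bdc_lr G).mpr h5) Walk.nil))))
  have hle : (_root_.bipartiteDoubleCover G).dist (Sum.inl u) (Sum.inr u) ≤ 5 := by
    simpa [p] using SimpleGraph.dist_le p
  obtain ⟨q, hq⟩ := p.reachable.exists_walk_length_eq_dist
  have hodd : ¬ Even ((_root_.bipartiteDoubleCover G).dist (Sum.inl u) (Sum.inr u)) := fun h =>
    by simpa using (bdc_parity G q).mp (hq ▸ h)
  have h1' : (_root_.bipartiteDoubleCover G).dist (Sum.inl u) (Sum.inr u) ≠ 1 := fun h =>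
    G.loopless.irrefl u ((bdc_lr G).mp (SimpleGraph.dist_eq_one_iff_adj.mp h))
  have h3' : (_root_.bipartiteDoubleCover G).dist (Sum.inl u) (Sum.inr u) ≠ 3 := fun h => no_walk3 G htf q (by omega)
  rw [Nat.even_iff] at hodd
  omega

lemma dist_rr (u v : V) : (_root_.bipartiteDoubleCover G).dist (Sum.inr u) (Sum.inr v) = (_root_.bipartiteDoubleCover G).dist (Sum.inl u) (Sum.inl v) := by
  have := bdc_dist_swap G (Sum.inl u) (Sum.inl v)
  simpa using this

lemma dist_rl (u v : V) : (_root_.bipartiteDoubleCover G).dist (Sum.inr u) (Sum.inl v) = (_root_.bipartiteDoubleCover G).dist (Sum.inl v) (Sum.inr u) :=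
  SimpleGraph.dist_comm ..

end Dist

end Lemmas

theorem stmt5 {V : Type*} [Fintype V] (G : SimpleGraph V)
    [DecidableRel G.Adj] (k : ℕ) (hk : 3 ≤ k)
    (hconn : G.Connected) (hreg : G.IsRegularOfDegree k) (hdiam : G.diam = 2)
    (htf : ∀ u v : V, G.Adj u v → ∀ x : V, ¬(G.Adj u x ∧ G.Adj v x))
    (hirr : ∀ u v : V, G.neighborSet u = G.neighborSet v → u = v)
    (w : V → ℝ) (lam : ℝ) (hw : (G.adjMatrix ℝ).mulVec w = lam • w)
    (hsum : ∑ v : V, w v = 0) :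
    (distMatrix (_root_.bipartiteDoubleCover G)).mulVec (Sum.elim w w) = 0 ∧
    (distMatrix (_root_.bipartiteDoubleCover G)).mulVec (Sum.elim w (-w)) =
      (4 * lam - 4) • Sum.elim w (-w) := by
  classical
  set B := _root_.bipartiteDoubleCover G with hB
  have entry_ll : ∀ u v : V, distMatrix B (Sum.inl u) (Sum.inl v) =
      2 + 2 * (if G.Adj u v then (1:ℝ) else 0) - 2 * (if u = v then (1:ℝ) else 0) := by
    intro u v
    by_cases h : u = v
    · subst h
      simp [distMatrix, dist_ll_self]
    · by_cases ha : G.Adj u v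
      · simp [distMatrix, dist_ll_adj G hconn hdiam k hk hreg htf hirr ha, ha, h, hB]
        norm_num
      · simp [distMatrix, dist_ll_nadj G hconn hdiam h ha, ha, h, hB]
  have entry_lr : ∀ u v : V, distMatrix B (Sum.inl u) (Sum.inr v) =
      3 - 2 * (if G.Adj u v then (1:ℝ) else 0) + 2 * (if u = v then (1:ℝ) else 0) := by
    intro u v
    by_cases h : u = v
    · subst h
      simp [distMatrix, dist_lr_self G hconn hdiam k hk hreg htf hirr u, G.irrefl, hB]
      norm_num
    · by_cases ha : G.Adj u v
      · simp [distMatrix, dist_lr_adj G ha, ha, h, hB]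
        norm_num
      · simp [distMatrix, dist_lr_nadj G hconn hdiam k hreg hirr h ha, ha, h, hB]
  have entry_rr : ∀ u v : V, distMatrix B (Sum.inr u) (Sum.inr v) =
      2 + 2 * (if G.Adj u v then (1:ℝ) else 0) - 2 * (if u = v then (1:ℝ) else 0) := by
    intro u v
    rw [← entry_ll u v]
    simp only [distMatrix, Matrix.of_apply]
    congr 1
    exact dist_rr G u v
  have entry_rl : ∀ u v : V, distMatrix B (Sum.inr u) (Sum.inl v) =
      3 - 2 * (if G.Adj u v then (1:ℝ) else 0) + 2 * (if u = v then (1:ℝ) else 0) := by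
    intro u v
    have h1 : distMatrix B (Sum.inr u) (Sum.inl v) = distMatrix B (Sum.inl v) (Sum.inr u) := by
      simp only [distMatrix, Matrix.of_apply]
      congr 1
      exact dist_rl G u v
    have h2 : (if G.Adj v u then (1:ℝ) else 0) = (if G.Adj u v then (1:ℝ) else 0) :=
      if_congr (G.adj_comm v u) rfl rfl
    have h3 : (if v = u then (1:ℝ) else 0) = (if u = v then (1:ℝ) else 0) :=
      if_congr eq_comm rfl rfl
    rw [h1, entry_lr v u, h2, h3]
  have hA : ∀ u : V, ∑ v : V, (if G.Adj u v then (1:ℝ) else 0) * w v = lam * w u := by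
    intro u
    have := congrFun hw u
    simpa [Matrix.mulVec, dotProduct, SimpleGraph.adjMatrix] using this
  have hδ : ∀ u : V, ∑ v : V, (if u = v then (1:ℝ) else 0) * w v = w u := by
    intro u
    simp [ite_mul, Finset.sum_ite_eq]
  have Sll : ∀ u : V, ∑ v : V, distMatrix B (Sum.inl u) (Sum.inl v) * w v
      = 2 * lam * w u - 2 * w u := by
    intro u
    calc ∑ v : V, distMatrix B (Sum.inl u) (Sum.inl v) * w v
        = ∑ v : V, (2 * w v + 2 * ((if G.Adj u v then (1:ℝ) else 0) * w v)
            - 2 * ((if u = v then (1:ℝ) else 0) * w v)) :=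
          Finset.sum_congr rfl (fun v _ => by rw [entry_ll u v]; ring)
      _ = 2 * (∑ v : V, w v) + 2 * (∑ v : V, (if G.Adj u v then (1:ℝ) else 0) * w v)
            - 2 * (∑ v : V, (if u = v then (1:ℝ) else 0) * w v) := by
          rw [Finset.sum_sub_distrib, Finset.sum_add_distrib, ← Finset.mul_sum,
            ← Finset.mul_sum, ← Finset.mul_sum]
      _ = 2 * lam * w u - 2 * w u := by rw [hsum, hA, hδ]; ring
  have Slr : ∀ u : V, ∑ v : V, distMatrix B (Sum.inl u) (Sum.inr v) * w v
      = 2 * w u - 2 * lam * w u := by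
    intro u
    calc ∑ v : V, distMatrix B (Sum.inl u) (Sum.inr v) * w v
        = ∑ v : V, (3 * w v - 2 * ((if G.Adj u v then (1:ℝ) else 0) * w v)
            + 2 * ((if u = v then (1:ℝ) else 0) * w v)) :=
          Finset.sum_congr rfl (fun v _ => by rw [entry_lr u v]; ring)
      _ = 3 * (∑ v : V, w v) - 2 * (∑ v : V, (if G.Adj u v then (1:ℝ) else 0) * w v)
            + 2 * (∑ v : V, (if u = v then (1:ℝ) else 0) * w v) := by
          rw [Finset.sum_add_distrib, Finset.sum_sub_distrib, ← Finset.mul_sum,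
            ← Finset.mul_sum, ← Finset.mul_sum]
      _ = 2 * w u - 2 * lam * w u := by rw [hsum, hA, hδ]; ring
  have Srl : ∀ u : V, ∑ v : V, distMatrix B (Sum.inr u) (Sum.inl v) * w v
      = 2 * w u - 2 * lam * w u := by
    intro u
    rw [← Slr u]
    exact Finset.sum_congr rfl (fun v _ => by rw [entry_rl u v, entry_lr u v])
  have Srr : ∀ u : V, ∑ v : V, distMatrix B (Sum.inr u) (Sum.inr v) * w v
      = 2 * lam * w u - 2 * w u := by
    intro u
    rw [← Sll u]
    exact Finset.sum_congr rfl (fun v _ => by rw [entry_rr u v, entry_ll u v])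
  constructor
  · funext x
    rcases x with u | u
    · show ∑ y : V ⊕ V, distMatrix B (Sum.inl u) y * Sum.elim w w y = 0
      rw [Fintype.sum_sum_type]
      simp only [Sum.elim_inl, Sum.elim_inr]
      rw [Sll u, Slr u]
      ring
    · show ∑ y : V ⊕ V, distMatrix B (Sum.inr u) y * Sum.elim w w y = 0
      rw [Fintype.sum_sum_type]
      simp only [Sum.elim_inl, Sum.elim_inr]
      rw [Srl u, Srr u]
      ring
  · funext x
    rcases x with u | u
    · show ∑ y : V ⊕ V, distMatrix B (Sum.inl u) y * Sum.elim w (-w) y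
        = (4 * lam - 4) * Sum.elim w (-w) (Sum.inl u)
      rw [Fintype.sum_sum_type]
      simp only [Sum.elim_inl, Sum.elim_inr, Pi.neg_apply]
      have : ∑ v : V, distMatrix B (Sum.inl u) (Sum.inr v) * (- w v)
          = -(2 * w u - 2 * lam * w u) := by
        rw [← Slr u, ← Finset.sum_neg_distrib]
        exact Finset.sum_congr rfl (fun v _ => by ring)
      rw [this, Sll u]
      ring
    · show ∑ y : V ⊕ V, distMatrix B (Sum.inr u) y * Sum.elim w (-w) y
        = (4 * lam - 4) * Sum.elim w (-w) (Sum.inr u)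
      rw [Fintype.sum_sum_type]
      simp only [Sum.elim_inl, Sum.elim_inr, Pi.neg_apply]
      have : ∑ v : V, distMatrix B (Sum.inr u) (Sum.inr v) * (- w v)
          = -(2 * lam * w u - 2 * w u) := by
        rw [← Srr u, ← Finset.sum_neg_distrib]
        exact Finset.sum_congr rfl (fun v _ => by ring)
      rw [this, Srl u]
      ring
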